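/- There exist constants M > 0 and 0 < λ < min_{1≤j≤n} (4 R_j(T))^{−1} such that for every j = 1,…,n, |∂u/∂x_j(t,x)| ≤ M (R_j(T) − R_j(t))^{−1/2} exp(λ|x|²) for all (t,x) ∈ [t₀,T) × ℝⁿ. -/

import Mathlib

/-!
For fixed `t`, `u t` is a constant plus `exp (-∫ A₁)` times the integral of `g` against a product of
one-dimensional heat kernels `K_σₖ` of variances `σₖ = R_k(T) - R_k(t)`, centred at `x - a` with
`a_k = ∫ r_k`. Differentiating in `x_j` only hits the `j`-th kernel, and
`|z / σ| K_σ(z) ≤ 2 σ^(-1/2) K_{2σ}(z)`; on a unit neighbourhood of `x_j` the kernel `K_{2σ}(z + δ)`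
is dominated by a multiple of `K_{4σ}(z)`, which justifies differentiating under the integral sign
because `λ' < (16 σ)⁻¹`. The Gaussian growth of `g` splits the resulting bound into a product of
one-dimensional integrals
`∫ exp (λ' s²) K_τ(m - s) ds = (1 - 2λ'τ)^(-1/2) exp (λ' m² / (1 - 2λ'τ)) ≤ √2 exp (2λ' m²)`,
and `m_k² ≤ 2 x_k² + 2 a_k²` with `|a_k| ≤ C_r (T - t₀)` gives the estimate with `λ = 4λ'`.
-/

open Real MeasureTheory

noncomputable def heatKernel (σ z : ℝ) : ℝ := (2 * π * σ) ^ (-(1 : ℝ) / 2) * exp (-z ^ 2 / (2 * σ))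

section HeatKernel

variable {σ : ℝ}

lemma heatKernel_eq_inv_sqrt (hσ : 0 ≤ σ) (z : ℝ) :
    heatKernel σ z = (√(2 * π))⁻¹ * (√σ)⁻¹ * exp (-z ^ 2 / (2 * σ)) := by
  rw [heatKernel, rpow_div_two_eq_sqrt _ (by positivity), rpow_neg_one, sqrt_mul (by positivity),
    mul_inv]

lemma heatKernel_pos (hσ : 0 < σ) (z : ℝ) : 0 < heatKernel σ z := by
  rw [heatKernel_eq_inv_sqrt hσ.le]
  have := sqrt_pos.2 hσ
  positivity

@[fun_prop]
lemma continuous_heatKernel (σ : ℝ) : Continuous (heatKernel σ) := by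
  unfold heatKernel
  fun_prop

lemma hasDerivAt_heatKernel (σ z : ℝ) :
    HasDerivAt (heatKernel σ) (-(z / σ) * heatKernel σ z) z := by
  have h : HasDerivAt (fun w : ℝ => -w ^ 2 / (2 * σ)) (-(2 * z) / (2 * σ)) z := by
    simpa using ((hasDerivAt_id z).pow 2).neg.div_const (2 * σ)
  refine (h.exp.const_mul ((2 * π * σ) ^ (-(1 : ℝ) / 2))).congr_deriv ?_
  unfold heatKernel
  ring

lemma abs_mul_exp_neg_sq_div_le (hσ : 0 < σ) (z : ℝ) :
    |z| * exp (-z ^ 2 / (2 * σ)) ≤ √(2 * σ) * exp (-z ^ 2 / (4 * σ)) := by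
  have hsq : z ^ 2 ≤ (√(2 * σ) * exp (z ^ 2 / (4 * σ))) ^ 2 := by
    rw [mul_pow, sq_sqrt (by positivity), ← exp_nat_mul]
    have hexp := add_one_le_exp (z ^ 2 / (2 * σ))
    have h2 : (2 : ℕ) * (z ^ 2 / (4 * σ)) = z ^ 2 / (2 * σ) := by field_simp; ring
    rw [h2]
    calc z ^ 2 = 2 * σ * (z ^ 2 / (2 * σ)) := by field_simp
      _ ≤ 2 * σ * exp (z ^ 2 / (2 * σ)) := by gcongr; linarith
  calc |z| * exp (-z ^ 2 / (2 * σ))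
      ≤ √(2 * σ) * exp (z ^ 2 / (4 * σ)) * exp (-z ^ 2 / (2 * σ)) := by
        gcongr; exact abs_le_of_sq_le_sq hsq (by positivity)
    _ = √(2 * σ) * exp (-z ^ 2 / (4 * σ)) := by
      rw [mul_assoc, ← exp_add]; congr 2; field_simp; ring

lemma abs_div_mul_heatKernel_le (hσ : 0 < σ) (z : ℝ) :
    |z / σ| * heatKernel σ z ≤ 2 * σ ^ (-(1 : ℝ) / 2) * heatKernel (2 * σ) z := by
  rw [heatKernel_eq_inv_sqrt hσ.le, heatKernel_eq_inv_sqrt (by positivity),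
    rpow_div_two_eq_sqrt _ hσ.le, rpow_neg_one, sqrt_mul zero_le_two σ, abs_div, abs_of_pos hσ]
  calc |z| / σ * ((√(2 * π))⁻¹ * (√σ)⁻¹ * exp (-z ^ 2 / (2 * σ)))
      = (√(2 * π))⁻¹ * (√σ)⁻¹ / σ * (|z| * exp (-z ^ 2 / (2 * σ))) := by ring
    _ ≤ (√(2 * π))⁻¹ * (√σ)⁻¹ / σ * (√(2 * σ) * exp (-z ^ 2 / (4 * σ))) := by
      gcongr ?_ * ?_
      exact abs_mul_exp_neg_sq_div_le hσ z
    _ = _ := by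
      rw [sqrt_mul zero_le_two σ, show 2 * (2 * σ) = 4 * σ by ring]
      field_simp
      rw [sq_sqrt hσ.le, sq_sqrt zero_le_two, mul_comm]

lemma heatKernel_add_le (hσ : 0 < σ) (z : ℝ) {δ : ℝ} (hδ : |δ| ≤ 1) :
    heatKernel σ (z + δ) ≤ √2 * exp (2 * σ)⁻¹ * heatKernel (2 * σ) z := by
  have hexp : -(z + δ) ^ 2 / (2 * σ) ≤ (2 * σ)⁻¹ + -z ^ 2 / (2 * (2 * σ)) := by
    have hδ2 : δ ^ 2 ≤ 1 := by nlinarith [sq_abs δ, abs_nonneg δ]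
    calc -(z + δ) ^ 2 / (2 * σ) ≤ (1 - z ^ 2 / 2) / (2 * σ) := by
          gcongr; nlinarith [sq_nonneg (z + 2 * δ)]
      _ = _ := by field_simp; ring
  rw [heatKernel_eq_inv_sqrt hσ.le, heatKernel_eq_inv_sqrt (by positivity), sqrt_mul zero_le_two σ]
  calc (√(2 * π))⁻¹ * (√σ)⁻¹ * exp (-(z + δ) ^ 2 / (2 * σ))
      ≤ (√(2 * π))⁻¹ * (√σ)⁻¹ * exp ((2 * σ)⁻¹ + -z ^ 2 / (2 * (2 * σ))) := by gcongr
    _ = _ := by rw [exp_add]; field_simp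

lemma abs_div_mul_heatKernel_add_le (hσ : 0 < σ) (z : ℝ) {δ : ℝ} (hδ : |δ| ≤ 1) :
    |(z + δ) / σ| * heatKernel σ (z + δ) ≤
      2 * σ ^ (-(1 : ℝ) / 2) * (√2 * exp (4 * σ)⁻¹) * heatKernel (4 * σ) z := by
  calc |(z + δ) / σ| * heatKernel σ (z + δ)
      ≤ 2 * σ ^ (-(1 : ℝ) / 2) * heatKernel (2 * σ) (z + δ) := abs_div_mul_heatKernel_le hσ _
    _ ≤ 2 * σ ^ (-(1 : ℝ) / 2) * (√2 * exp (2 * (2 * σ))⁻¹ * heatKernel (2 * (2 * σ)) z) := by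
      gcongr
      exact heatKernel_add_le (by positivity) z hδ
    _ = _ := by ring_nf

variable {lam : ℝ}

lemma exp_mul_sq_mul_heatKernel_eq (hσ : 0 < σ) (h : 2 * lam * σ < 1) (m s : ℝ) :
    exp (lam * s ^ 2) * heatKernel σ (m - s) =
      (2 * π * σ) ^ (-(1 : ℝ) / 2) * exp (lam * m ^ 2 / (1 - 2 * lam * σ)) *
        exp (-((1 - 2 * lam * σ) / (2 * σ)) * (s - m / (1 - 2 * lam * σ)) ^ 2) := by
  have hq : 1 - 2 * lam * σ ≠ 0 := by linarith
  rw [heatKernel, mul_left_comm, ← exp_add, mul_assoc _ (exp _), ← exp_add]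
  congr 2
  generalize hq' : 1 - 2 * lam * σ = q at hq ⊢
  obtain rfl : lam = (1 - q) / (2 * σ) := by field_simp; linarith
  field_simp
  ring

lemma integrable_exp_mul_sq_mul_heatKernel (hσ : 0 < σ) (h : 2 * lam * σ < 1) (m : ℝ) :
    Integrable fun s => exp (lam * s ^ 2) * heatKernel σ (m - s) := by
  simp_rw [exp_mul_sq_mul_heatKernel_eq hσ h m]
  have hβ : 0 < (1 - 2 * lam * σ) / (2 * σ) := div_pos (by linarith) (by positivity)
  exact ((integrable_exp_neg_mul_sq hβ).comp_sub_right _).const_mul _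

lemma integral_exp_mul_sq_mul_heatKernel (hσ : 0 < σ) (h : 2 * lam * σ < 1) (m : ℝ) :
    ∫ s, exp (lam * s ^ 2) * heatKernel σ (m - s) =
      (√(1 - 2 * lam * σ))⁻¹ * exp (lam * m ^ 2 / (1 - 2 * lam * σ)) := by
  have hq : 0 < 1 - 2 * lam * σ := by linarith
  simp_rw [exp_mul_sq_mul_heatKernel_eq hσ h m]
  rw [integral_const_mul, integral_sub_right_eq_self (fun s => exp (-_ * s ^ 2)),
    integral_gaussian, rpow_div_two_eq_sqrt _ (by positivity), rpow_neg_one,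
    div_div_eq_mul_div, mul_left_comm π 2 σ, ← mul_assoc, sqrt_div' _ hq.le,
    sqrt_mul (by positivity) σ]
  field_simp

lemma integral_exp_mul_sq_mul_heatKernel_le (hσ : 0 < σ) (hlam : 0 ≤ lam) (h : 4 * lam * σ ≤ 1)
    (m : ℝ) :
    ∫ s, exp (lam * s ^ 2) * heatKernel σ (m - s) ≤ √2 * exp (2 * lam * m ^ 2) := by
  have hq : 2⁻¹ ≤ 1 - 2 * lam * σ := by linarith
  rw [integral_exp_mul_sq_mul_heatKernel hσ (by linarith), ← sqrt_inv]
  gcongr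
  · exact inv_le_of_inv_le₀ (by norm_num) hq
  · rw [div_le_iff₀ (by linarith)]
    nlinarith [mul_nonneg hlam (sq_nonneg m)]

end HeatKernel

open Finset Function

section GaussianWeight

variable {ι : Type*} [Fintype ι] {lam c : ℝ} {κ : ι → ℝ → ℝ} {h : (ι → ℝ) → ℝ}

lemma exp_mul_sum_sq_mul_prod (lam : ℝ) (κ : ι → ℝ → ℝ) (y : ι → ℝ) :
    exp (lam * ∑ k, y k ^ 2) * ∏ k, κ k (y k) = ∏ k, exp (lam * y k ^ 2) * κ k (y k) := by
  rw [mul_sum, exp_sum, prod_mul_distrib]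

lemma integrable_exp_mul_sum_sq_mul_prod
    (hκ : ∀ k, Integrable fun s => exp (lam * s ^ 2) * κ k s) :
    Integrable fun y : ι → ℝ => exp (lam * ∑ k, y k ^ 2) * ∏ k, κ k (y k) := by
  rw [funext (exp_mul_sum_sq_mul_prod lam κ)]
  exact Integrable.fintype_prod hκ

lemma integrable_of_abs_le_exp_mul_prod (hκ : ∀ k, Integrable fun s => exp (lam * s ^ 2) * κ k s)
    (hh : AEStronglyMeasurable h)
    (hle : ∀ y, |h y| ≤ c * (exp (lam * ∑ k, y k ^ 2) * ∏ k, κ k (y k))) : Integrable h :=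
  ((integrable_exp_mul_sum_sq_mul_prod hκ).const_mul c).mono' hh <| ae_of_all _ hle

lemma abs_integral_le_of_abs_le_exp_mul_prod
    (hκ : ∀ k, Integrable fun s => exp (lam * s ^ 2) * κ k s)
    (hle : ∀ y, |h y| ≤ c * (exp (lam * ∑ k, y k ^ 2) * ∏ k, κ k (y k))) :
    |∫ y, h y| ≤ c * ∏ k, ∫ s, exp (lam * s ^ 2) * κ k s := by
  rw [← integral_fintype_prod_eq_prod (fun k s => exp (lam * s ^ 2) * κ k s),
    ← MeasureTheory.integral_const_mul]
  simp_rw [← exp_mul_sum_sq_mul_prod]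
  exact norm_integral_le_of_norm_le (f := h)
    ((integrable_exp_mul_sum_sq_mul_prod hκ).const_mul c) (ae_of_all _ hle)

end GaussianWeight

section HeatKernelProduct

variable {ι : Type*} [Fintype ι] [DecidableEq ι]

lemma prod_apply_update {α M : Type*} [CommMonoid M] (φ : ι → α → M) (x : ι → α) (j : ι)
    (v : α) : ∏ k, φ k (update x j v k) = φ j v * ∏ k ∈ univ.erase j, φ k (x k) := by
  simp_rw [apply_update φ x j v]
  rw [prod_update_of_mem (mem_univ j), sdiff_singleton_eq_erase]

variable {g : (ι → ℝ) → ℝ} {c lam : ℝ} {σ : ι → ℝ}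

lemma abs_mul_mul_heatKernel_mul_prod_le {y : ι → ℝ}
    (hgy : |g y| ≤ c * exp (lam * ∑ k, y k ^ 2)) (hσ : ∀ k, 0 < σ k) (m : ι → ℝ) (j : ι)
    {w z C τ : ℝ} (hwz : |w| * heatKernel (σ j) z ≤ C * heatKernel τ (m j - y j)) :
    |g y * (w * (heatKernel (σ j) z * ∏ k ∈ univ.erase j, heatKernel (σ k) (m k - y k)))| ≤
      C * c * (exp (lam * ∑ k, y k ^ 2) * ∏ k, heatKernel (update σ j τ k) (m k - y k)) := by
  rw [prod_apply_update (fun k v => heatKernel v (m k - y k)) σ j τ]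
  have hrest : 0 ≤ ∏ k ∈ univ.erase j, heatKernel (σ k) (m k - y k) :=
    prod_nonneg fun k _ => (heatKernel_pos (hσ k) _).le
  calc |g y * (w * (heatKernel (σ j) z * ∏ k ∈ univ.erase j, heatKernel (σ k) (m k - y k)))|
      = |g y| * (|w| * heatKernel (σ j) z * ∏ k ∈ univ.erase j, heatKernel (σ k) (m k - y k)) := by
        rw [abs_mul, abs_mul, abs_mul, abs_of_pos (heatKernel_pos (hσ j) z), abs_of_nonneg hrest,
          mul_assoc]
    _ ≤ c * exp (lam * ∑ k, y k ^ 2) *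
          (C * heatKernel τ (m j - y j) * ∏ k ∈ univ.erase j, heatKernel (σ k) (m k - y k)) :=
        mul_le_mul hgy (mul_le_mul_of_nonneg_right hwz hrest)
          (mul_nonneg (mul_nonneg (abs_nonneg w) (heatKernel_pos (hσ j) z).le) hrest)
          ((abs_nonneg _).trans hgy)
    _ = _ := by ring

theorem hasDerivAt_integral_mul_prod_heatKernel (hg : Continuous g)
    (hgrowth : ∀ y, |g y| ≤ c * exp (lam * ∑ k, y k ^ 2)) (hσ : ∀ k, 0 < σ k)
    (hσlam : ∀ k, 8 * lam * σ k < 1) (x a : ι → ℝ) (j : ι) :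
    HasDerivAt (fun ξ => ∫ y, g y * ∏ k, heatKernel (σ k) (update x j ξ k - a k - y k))
      (∫ y, g y * (-((x j - a j - y j) / σ j) * ∏ k, heatKernel (σ k) (x k - a k - y k)))
      (x j) := by
  have hsplit : ∀ (ξ : ℝ) (y : ι → ℝ), ∏ k, heatKernel (σ k) (update x j ξ k - a k - y k) =
      heatKernel (σ j) (ξ - a j - y j) * ∏ k ∈ univ.erase j, heatKernel (σ k) (x k - a k - y k) :=
    fun ξ y => prod_apply_update (fun k v => heatKernel (σ k) (v - a k - y k)) x j ξ
  have hkernel : ∀ τ : ι → ℝ, (∀ k, 0 < τ k ∧ 2 * lam * τ k < 1) →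
      ∀ k, Integrable fun s => exp (lam * s ^ 2) * heatKernel (τ k) (x k - a k - s) :=
    fun τ hτ k => integrable_exp_mul_sq_mul_heatKernel (hτ k).1 (hτ k).2 _
  have hτ : ∀ k, 0 < update σ j (4 * σ j) k ∧ 2 * lam * update σ j (4 * σ j) k < 1 := by
    refine (forall_update_iff σ fun k τ => 0 < τ ∧ 2 * lam * τ < 1).2 ⟨?_, fun k _ => ?_⟩
    · exact ⟨by linarith [hσ j], by linarith [hσlam j]⟩
    · exact ⟨hσ k, by linarith [hσlam k]⟩
  have hderiv : ∀ (y : ι → ℝ) (ξ : ℝ),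
      HasDerivAt (fun ξ => g y * ∏ k, heatKernel (σ k) (update x j ξ k - a k - y k))
        (g y * (-((ξ - a j - y j) / σ j) *
          ∏ k, heatKernel (σ k) (update x j ξ k - a k - y k))) ξ := by
    intro y ξ
    simp_rw [hsplit]
    have hK := (hasDerivAt_heatKernel (σ j) _).comp ξ
      (((hasDerivAt_id ξ).sub_const (a j)).sub_const (y j))
    exact ((hK.mul_const _).const_mul (g y)).congr_deriv (by simp only [id]; ring)
  have hbound : ∀ (y : ι → ℝ), ∀ ξ ∈ Metric.ball (x j) 1,
      ‖g y * (-((ξ - a j - y j) / σ j) * ∏ k, heatKernel (σ k) (update x j ξ k - a k - y k))‖ ≤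
        2 * σ j ^ (-(1 : ℝ) / 2) * (√2 * exp (4 * σ j)⁻¹) * c *
          (exp (lam * ∑ k, y k ^ 2) *
            ∏ k, heatKernel (update σ j (4 * σ j) k) (x k - a k - y k)) := by
    intro y ξ hξ
    rw [hsplit, Real.norm_eq_abs]
    refine abs_mul_mul_heatKernel_mul_prod_le (hgrowth y) hσ (fun k => x k - a k) j ?_
    rw [abs_neg, show ξ - a j - y j = x j - a j - y j + (ξ - x j) by ring]
    exact abs_div_mul_heatKernel_add_le (hσ j) _ (mem_ball_iff_norm.1 hξ).le
  have hint :
      Integrable fun y => g y * ∏ k, heatKernel (σ k) (update x j (x j) k - a k - y k) := by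
    simp only [update_eq_self]
    refine integrable_of_abs_le_exp_mul_prod (c := c) (hkernel σ fun k => ⟨hσ k, ?_⟩)
      (by fun_prop : Continuous _).aestronglyMeasurable fun y => ?_
    · linarith [hσlam k]
    have hK : 0 ≤ ∏ k, heatKernel (σ k) (x k - a k - y k) :=
      prod_nonneg fun k _ => (heatKernel_pos (hσ k) _).le
    rw [abs_mul, abs_of_nonneg hK, ← mul_assoc]
    exact mul_le_mul_of_nonneg_right (hgrowth y) hK
  have := hasDerivAt_integral_of_dominated_loc_of_deriv_le (Metric.ball_mem_nhds (x j) one_pos)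
    (Filter.Eventually.of_forall fun ξ => (by fun_prop : Continuous _).aestronglyMeasurable) hint
    (by fun_prop : Continuous _).aestronglyMeasurable (ae_of_all _ hbound)
    ((integrable_exp_mul_sum_sq_mul_prod (hkernel _ hτ)).const_mul _)
    (ae_of_all _ fun y ξ _ => hderiv y ξ)
  simpa only [update_eq_self] using this.2

theorem abs_integral_mul_div_mul_prod_heatKernel_le
    (hgrowth : ∀ y, |g y| ≤ c * exp (lam * ∑ k, y k ^ 2)) (hlam : 0 ≤ lam) (hσ : ∀ k, 0 < σ k)
    (hσlam : ∀ k, 8 * lam * σ k ≤ 1) (x a : ι → ℝ) (j : ι) :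
    |∫ y, g y * (-((x j - a j - y j) / σ j) * ∏ k, heatKernel (σ k) (x k - a k - y k))| ≤
      2 * σ j ^ (-(1 : ℝ) / 2) * c * ∏ k, √2 * exp (2 * lam * (x k - a k) ^ 2) := by
  have hc : 0 ≤ c := nonneg_of_mul_nonneg_left ((abs_nonneg _).trans (hgrowth 0)) (exp_pos _)
  have hτ : ∀ k, 0 < update σ j (2 * σ j) k ∧ 4 * lam * update σ j (2 * σ j) k ≤ 1 := by
    refine (forall_update_iff σ fun k τ => 0 < τ ∧ 4 * lam * τ ≤ 1).2 ⟨?_, fun k _ => ?_⟩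
    · exact ⟨by linarith [hσ j], by linarith [hσlam j]⟩
    · exact ⟨hσ k, by nlinarith [hσlam k, hσ k]⟩
  calc
    _ ≤ 2 * σ j ^ (-(1 : ℝ) / 2) * c *
        ∏ k, ∫ s, exp (lam * s ^ 2) * heatKernel (update σ j (2 * σ j) k) (x k - a k - s) := by
      refine abs_integral_le_of_abs_le_exp_mul_prod
        (fun k => integrable_exp_mul_sq_mul_heatKernel (hτ k).1 (by linarith [(hτ k).2]) _)
        fun y => ?_
      rw [← mul_prod_erase _ _ (mem_univ j)]
      refine abs_mul_mul_heatKernel_mul_prod_le (hgrowth y) hσ (fun k => x k - a k) j ?_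
      rw [abs_neg]
      exact abs_div_mul_heatKernel_le (hσ j) _
    _ ≤ _ :=
      mul_le_mul_of_nonneg_left (prod_le_prod
        (fun k _ => integral_nonneg fun s =>
          mul_nonneg (exp_pos _).le (heatKernel_pos (hτ k).1 _).le)
        fun k _ => integral_exp_mul_sq_mul_heatKernel_le (hτ k).1 hlam (hτ k).2 _)
        (mul_nonneg (mul_nonneg zero_le_two (rpow_nonneg (hσ j).le _)) hc)

end HeatKernelProduct

lemma prod_sqrt_two_mul_exp_le {ι : Type*} [Fintype ι] {lam A : ℝ} (hlam : 0 ≤ lam)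
    (x : ι → ℝ) {a : ι → ℝ} (ha : ∀ k, |a k| ≤ A) :
    ∏ k, √2 * exp (2 * lam * (x k - a k) ^ 2) ≤
      (√2 * exp (4 * lam * A ^ 2)) ^ Fintype.card ι * exp (4 * lam * ∑ k, x k ^ 2) := by
  rw [mul_sum, exp_sum, ← card_univ, ← prod_const, ← prod_mul_distrib]
  refine prod_le_prod (fun k _ => by positivity) fun k _ => ?_
  rw [mul_assoc √2 (exp _), ← exp_add]
  gcongr
  have : a k ^ 2 ≤ A ^ 2 := sq_le_sq' (abs_le.1 (ha k)).1 (abs_le.1 (ha k)).2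
  nlinarith [sq_nonneg (x k + a k)]

lemma abs_intervalIntegral_le_of_abs_le {f : ℝ → ℝ} {t₀ T C t : ℝ}
    (hf : ∀ s ∈ Set.Icc t₀ T, |f s| ≤ C) (ht : t ∈ Set.Icc t₀ T) :
    |∫ s in t..T, f s| ≤ C * (T - t₀) := by
  have hC : 0 ≤ C := (abs_nonneg _).trans (hf t ht)
  have hsub : Set.uIoc t T ⊆ Set.Icc t₀ T := by
    rw [Set.uIoc_of_le ht.2]
    exact fun s hs => ⟨ht.1.trans hs.1.le, hs.2⟩
  calc |∫ s in t..T, f s| ≤ C * |T - t| :=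
        intervalIntegral.norm_integral_le_of_norm_le_const (f := f) fun s hs => hf s (hsub hs)
    _ ≤ C * (T - t₀) := by
      rw [abs_of_nonneg (sub_nonneg.2 ht.2)]
      gcongr
      exact ht.1

theorem feynman_kac_first_derivative_bound_general
    (n : ℕ) (t₀ T : ℝ)
    (R : Fin n → ℝ → ℝ)
    (hRnonneg : ∀ j, ∀ t ∈ Set.Icc t₀ T, 0 ≤ R j t)
    (hRmono : ∀ j, StrictMonoOn (R j) (Set.Icc t₀ T))
    (r : Fin n → ℝ → ℝ) (A₁ f : ℝ → ℝ)
    (Cr CA : ℝ) (hrB : ∀ j, ∀ t ∈ Set.Icc t₀ T, |r j t| ≤ Cr)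
    (hA₁B : ∀ t ∈ Set.Icc t₀ T, |A₁ t| ≤ CA)
    (g : (Fin n → ℝ) → ℝ) (hg : Continuous g)
    (c' lam' : ℝ) (hc' : 0 < c') (hlam' : 0 < lam')
    (hlam'' : ∀ j, lam' < (16 * R j T)⁻¹)
    (hgrowth : ∀ x : Fin n → ℝ, |g x| ≤ c' * Real.exp (lam' * ∑ j, (x j) ^ 2))
    (u : ℝ → (Fin n → ℝ) → ℝ)
    (hu : ∀ t : ℝ, t₀ ≤ t → t < T → ∀ x : Fin n → ℝ,
      u t x = -(∫ s in t..T, Real.exp (∫ ρ in s..t, A₁ ρ) * f s)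
        + Real.exp (-(∫ s in t..T, A₁ s)) *
          ∫ y : Fin n → ℝ, g y *
            ∏ j, (2 * Real.pi * (R j T - R j t)) ^ (-(1 : ℝ) / 2) *
              Real.exp (-(x j - (∫ s in t..T, r j s) - y j) ^ 2
                / (2 * (R j T - R j t)))) :
    ∃ M lam : ℝ, 0 < M ∧ 0 < lam ∧ (∀ j, lam < (4 * R j T)⁻¹) ∧
      ∀ j, ∀ t : ℝ, t₀ ≤ t → t < T → ∀ x : Fin n → ℝ,
        |deriv (fun ξ => u t (Function.update x j ξ)) (x j)|
          ≤ M * (R j T - R j t) ^ (-(1 : ℝ) / 2) * Real.exp (lam * ∑ j, (x j) ^ 2) := by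
  refine ⟨2 * c' * exp (CA * (T - t₀)) * (√2 * exp (4 * lam' * (Cr * (T - t₀)) ^ 2)) ^ n,
    4 * lam', by positivity, by positivity, fun j => ?_, ?_⟩
  · calc 4 * lam' < 4 * (16 * R j T)⁻¹ := by linarith [hlam'' j]
      _ = (4 * R j T)⁻¹ := by ring
  intro j t ht₀t htT x
  have ht : t ∈ Set.Icc t₀ T := ⟨ht₀t, htT.le⟩
  have hσ : ∀ k, 0 < R k T - R k t :=
    fun k => sub_pos.2 (hRmono k ht ⟨ht₀t.trans htT.le, le_rfl⟩ htT)
  have hσlam : ∀ k, 8 * lam' * (R k T - R k t) < 1 := fun k => by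
    have hRk : 0 < 16 * R k T := by linarith [hσ k, hRnonneg k t ht]
    have := (lt_inv_mul_iff₀ hRk).1 (by rw [mul_one]; exact hlam'' k)
    nlinarith [mul_nonneg hlam'.le (hRnonneg k t ht), mul_pos hlam' hRk]
  have hderiv := ((hasDerivAt_integral_mul_prod_heatKernel hg hgrowth hσ hσlam x
    (fun k => ∫ s in t..T, r k s) j).const_mul (exp (-∫ s in t..T, A₁ s))).const_add
    (-∫ s in t..T, exp (∫ ρ in s..t, A₁ ρ) * f s)
  rw [(hderiv.congr_of_eventuallyEq (Filter.Eventually.of_forall fun ξ =>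
    hu t ht₀t htT (update x j ξ))).deriv, abs_mul, abs_exp]
  have hA : exp (-∫ s in t..T, A₁ s) ≤ exp (CA * (T - t₀)) :=
    exp_le_exp.2 ((neg_le_abs _).trans (abs_intervalIntegral_le_of_abs_le hA₁B ht))
  have hD := abs_integral_mul_div_mul_prod_heatKernel_le hgrowth hlam'.le hσ
    (fun k => (hσlam k).le) x (fun k => ∫ s in t..T, r k s) j
  have hprod := prod_sqrt_two_mul_exp_le hlam'.le x
    fun k => abs_intervalIntegral_le_of_abs_le (hrB k) ht
  rw [Fintype.card_fin] at hprod
  calc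
    _ ≤ exp (CA * (T - t₀)) * (2 * (R j T - R j t) ^ (-(1 : ℝ) / 2) * c' *
        ((√2 * exp (4 * lam' * (Cr * (T - t₀)) ^ 2)) ^ n * exp (4 * lam' * ∑ k, x k ^ 2))) := by
      gcongr
      exact hD.trans (mul_le_mul_of_nonneg_left hprod
        (mul_nonneg (mul_nonneg zero_le_two (rpow_nonneg (hσ j).le _)) hc'.le))
    _ = _ := by ring

/-- There exist `M > 0` and `0 < λ < min_j (4 R_j(T))⁻¹` such that for
every `j`, `|∂u/∂x_j(t,x)| ≤ M (R_j(T) − R_j(t))^(−1/2) exp(λ|x|²)` for all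
`(t,x) ∈ [t₀,T) × ℝⁿ`. -/
theorem feynman_kac_first_derivative_bound
    (n : ℕ) (hn : 1 ≤ n) (t₀ T : ℝ) (ht₀ : 0 ≤ t₀) (hT : t₀ < T)
    (R : Fin n → ℝ → ℝ)
    (hRsmooth : ∀ j, ContDiffOn ℝ 1 (R j) (Set.Icc t₀ T))
    (hRnonneg : ∀ j, ∀ t ∈ Set.Icc t₀ T, 0 ≤ R j t)
    (hRmono : ∀ j, StrictMonoOn (R j) (Set.Icc t₀ T))
    (hRT : ∀ j, 0 < R j T)
    (r : Fin n → ℝ → ℝ) (A₁ f : ℝ → ℝ)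
    (hr : ∀ j, ContinuousOn (r j) (Set.Icc t₀ T))
    (hA₁ : ContinuousOn A₁ (Set.Icc t₀ T)) (hf : ContinuousOn f (Set.Icc t₀ T))
    (Cr CA Cf : ℝ) (hrB : ∀ j, ∀ t ∈ Set.Icc t₀ T, |r j t| ≤ Cr)
    (hA₁B : ∀ t ∈ Set.Icc t₀ T, |A₁ t| ≤ CA) (hfB : ∀ t ∈ Set.Icc t₀ T, |f t| ≤ Cf)
    (g : (Fin n → ℝ) → ℝ) (hg : Continuous g)
    (c' lam' : ℝ) (hc' : 0 < c') (hlam' : 0 < lam')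
    (hlam'' : ∀ j, lam' < (16 * R j T)⁻¹)
    (hgrowth : ∀ x : Fin n → ℝ, |g x| ≤ c' * Real.exp (lam' * ∑ j, (x j) ^ 2))
    (u : ℝ → (Fin n → ℝ) → ℝ)
    (hu : ∀ t : ℝ, t₀ ≤ t → t < T → ∀ x : Fin n → ℝ,
      u t x = -(∫ s in t..T, Real.exp (∫ ρ in s..t, A₁ ρ) * f s)
        + Real.exp (-(∫ s in t..T, A₁ s)) *
          ∫ y : Fin n → ℝ, g y *
            ∏ j, (2 * Real.pi * (R j T - R j t)) ^ (-(1 : ℝ) / 2) *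
              Real.exp (-(x j - (∫ s in t..T, r j s) - y j) ^ 2
                / (2 * (R j T - R j t)))) :
    ∃ M lam : ℝ, 0 < M ∧ 0 < lam ∧ (∀ j, lam < (4 * R j T)⁻¹) ∧
      ∀ j, ∀ t : ℝ, t₀ ≤ t → t < T → ∀ x : Fin n → ℝ,
        |deriv (fun ξ => u t (Function.update x j ξ)) (x j)|
          ≤ M * (R j T - R j t) ^ (-(1 : ℝ) / 2) * Real.exp (lam * ∑ j, (x j) ^ 2) :=
  feynman_kac_first_derivative_bound_general n t₀ T R hRnonneg hRmono r A₁ f Cr CA hrB hA₁B g hg c'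
    lam' hc' hlam' hlam'' hgrowth u hu
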